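/- (Hypergeometric representation for q(G) = G^l, discrete case.) Fix an integer l ≥ 1, set α_{d+1} = 0 and η = l^{d+1}ρ. Let P_n = Σ_{j=0}^n (G^l)^j(φ_n)/j! with G = R(H)∘Δ. Then for every n ≥ 0, P_n(x) = Σ_{j=0}^{⌊n/l⌋} [(−1)^{lj(d+1)} η^{lj} ∏_{k=1}^{d+1} ∏_{r=0}^{l−1} ((−n−α_k+r)/l)_j / j!] · φ_{n−lj}(x). -/
import Mathlib


open Polynomial

/-- Pochhammer symbol `(a)_j = a(a+1)⋯(a+j−1)`. -/
noncomputable def poch (a : ℂ) (j : ℕ) : ℂ := ∏ s ∈ Finset.range j, (a + s)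

/-- Multiplication by `x` on `ℂ[x]`. -/
noncomputable def Xop : Module.End ℂ (Polynomial ℂ) := LinearMap.mulLeft ℂ Polynomial.X

/-- The shift operator `f(x) ↦ f(x + c)` on `ℂ[x]`. -/
noncomputable def shiftOp (c : ℂ) : Module.End ℂ (Polynomial ℂ) :=
  (Polynomial.aeval (Polynomial.X + Polynomial.C c) :
    Polynomial ℂ →ₐ[ℂ] Polynomial ℂ).toLinearMap

/-- `(Δf)(x) = f(x+1) − f(x)`. -/
noncomputable def Delt : Module.End ℂ (Polynomial ℂ) := shiftOp 1 - 1

/-- `(∇f)(x) = f(x−1) − f(x)`. -/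
noncomputable def Nabl : Module.End ℂ (Polynomial ℂ) := shiftOp (-1) - 1

/-- `H = −x∇`, i.e., `(Hf)(x) = x(f(x) − f(x−1))`. -/
noncomputable def Hdis : Module.End ℂ (Polynomial ℂ) := -(Xop * Nabl)

/-- The falling-factorial polynomial `φ_n(x) = x(x−1)⋯(x−n+1)`. -/
noncomputable def ffact (n : ℕ) : Polynomial ℂ :=
  ∏ s ∈ Finset.range n, (Polynomial.X - Polynomial.C (s : ℂ))

/-- `G = R(H)∘Δ` with `R(H) = ρ·∏_{k=1}^d (H + α_k + 1)`. -/
noncomputable def Gdis (d : ℕ) (α : ℕ → ℂ) (ρ : ℂ) : Module.End ℂ (Polynomial ℂ) :=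
  (Polynomial.aeval Hdis
    (Polynomial.C ρ * ∏ k ∈ Finset.range d, (Polynomial.X + Polynomial.C (α k + 1)))) * Delt

section Aux
open Finset

lemma shiftOp_ffact (c : ℂ) (n : ℕ) :
    shiftOp c (ffact n) = ∏ s ∈ range n, (X + C c - C (s : ℂ)) := by
  simp [shiftOp, ffact, map_prod]

lemma ffact_succ (n : ℕ) : ffact (n+1) = ffact n * (X - C (n : ℂ)) := by
  simp [ffact, prod_range_succ]

lemma Delt_ffact (n : ℕ) : Delt (ffact (n+1)) = ((n : ℂ)+1) • ffact n := by
  have h1 : shiftOp 1 (ffact (n+1)) = ffact n * (X + C 1) := by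
    rw [shiftOp_ffact, prod_range_succ', ffact]
    congr 1
    · apply prod_congr rfl
      intro s _
      push_cast [C_add, C_1]
      ring
    · simp
  have h0 : Delt (ffact (n+1)) = shiftOp 1 (ffact (n+1)) - ffact (n+1) := by
    simp [Delt, LinearMap.sub_apply]
  rw [h0, h1, ffact_succ, smul_eq_C_mul, C_add, C_1]
  ring

lemma Hdis_ffact (n : ℕ) : Hdis (ffact n) = (n : ℂ) • ffact n := by
  have key : X * (∏ s ∈ range n, (X + C (-1) - C (s : ℂ))) = ffact n * (X - C (n:ℂ)) := by
    have h2 : ffact (n+1) = (∏ s ∈ range n, (X + C (-1) - C (s:ℂ))) * X := by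
      rw [ffact, prod_range_succ']
      congr 1
      · apply prod_congr rfl; intro s _; push_cast [C_add, C_1, C_neg]; ring
      · simp
    have h3 := ffact_succ n
    rw [h2] at h3
    rw [mul_comm]; exact h3
  have hN : Nabl (ffact n) = (∏ s ∈ range n, (X + C (-1) - C (s:ℂ))) - ffact n := by
    simp [Nabl, LinearMap.sub_apply, shiftOp_ffact]
  have h4 : Hdis (ffact n) = -(X * (Nabl (ffact n))) := by
    simp [Hdis, Xop, Module.End.mul_apply, LinearMap.mulLeft_apply]
  rw [h4, hN, mul_sub, key, smul_eq_C_mul]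
  ring

lemma Hdis_pow_ffact (k n : ℕ) : (Hdis ^ k) (ffact n) = ((n : ℂ) ^ k) • ffact n := by
  induction k with
  | zero => simp
  | succ k ih =>
    rw [pow_succ, Module.End.mul_apply, Hdis_ffact, map_smul, ih, smul_smul]
    ring_nf

lemma aeval_Hdis_ffact (p : Polynomial ℂ) (n : ℕ) :
    (Polynomial.aeval Hdis p) (ffact n) = (p.eval (n : ℂ)) • ffact n := by
  induction p using Polynomial.induction_on' with
  | add p q hp hq => simp [map_add, LinearMap.add_apply, hp, hq, add_smul]
  | monomial k a =>
    simp [aeval_monomial, Module.End.mul_apply, Hdis_pow_ffact, eval_monomial,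
      Module.algebraMap_end_apply, smul_smul, mul_comm]

/-- The eigenvalue function. -/
noncomputable def cc (d : ℕ) (α : ℕ → ℂ) (ρ : ℂ) (z : ℂ) : ℂ :=
  ρ * z * ∏ k ∈ range d, (z + α k)

lemma cc_zero (d : ℕ) (α : ℕ → ℂ) (ρ : ℂ) : cc d α ρ 0 = 0 := by simp [cc]

lemma Gdis_ffact (d : ℕ) (α : ℕ → ℂ) (ρ : ℂ) (n : ℕ) :
    Gdis d α ρ (ffact n) = cc d α ρ (n : ℂ) • ffact (n - 1) := by
  cases n with
  | zero =>
    have h0 : Delt (ffact 0) = 0 := by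
      simp [Delt, LinearMap.sub_apply, shiftOp, ffact]
    rw [Gdis, Module.End.mul_apply, h0, map_zero]
    simp [cc]
  | succ m =>
    rw [Gdis, Module.End.mul_apply, Delt_ffact, map_smul, aeval_Hdis_ffact, smul_smul]
    congr 1
    rw [eval_mul, eval_C, eval_prod, cc]
    push_cast
    rw [show (∏ k ∈ range d, eval ((m : ℂ)) (X + C (α k + 1)))
        = ∏ k ∈ range d, (((m : ℂ) + 1) + α k) from
      prod_congr rfl (fun k _ => by simp; ring)]
    ring

lemma Gpow_ffact (d : ℕ) (α : ℕ → ℂ) (ρ : ℂ) (m : ℕ) : ∀ n : ℕ,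
    ((Gdis d α ρ) ^ m) (ffact n)
      = (∏ i ∈ range m, cc d α ρ ((n : ℂ) - i)) • ffact (n - m) := by
  induction m with
  | zero => intro n; simp
  | succ m ih =>
    intro n
    rw [pow_succ, Module.End.mul_apply, Gdis_ffact d α ρ, map_smul, ih, smul_smul,
      Nat.sub_sub, Nat.add_comm 1 m]
    congr 1
    cases n with
    | zero =>
      rw [Nat.cast_zero, cc_zero, zero_mul]
      symm
      apply prod_eq_zero (mem_range.mpr (Nat.succ_pos m))
      simpa using cc_zero d α ρ
    | succ p =>
      rw [prod_range_succ', mul_comm]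
      congr 1
      · apply prod_congr rfl
        intro i _
        congr 1
        push_cast
        ring
      · congr 1
        push_cast
        ring

lemma reindex (f : ℕ → ℂ) (l j : ℕ) :
    ∏ i ∈ range (l * j), f i = ∏ s ∈ range j, ∏ r ∈ range l, f (l * s + r) := by
  induction j with
  | zero => simp
  | succ j ih =>
    rw [Nat.mul_succ, prod_range_add, ih, prod_range_succ]

lemma perk (a : ℂ) (l j : ℕ) (hl : (l : ℂ) ≠ 0) :
    ∏ i ∈ range (l * j), (a - i)
      = (-1) ^ (l * j) * (l : ℂ) ^ (l * j)
        * ∏ r ∈ range l, ∏ s ∈ range j, ((-a + r) / l + s) := by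
  rw [reindex]
  rw [Finset.prod_comm]
  have h : ∀ r ∈ range l, ∀ s ∈ range j,
      (a - ((l * s + r : ℕ) : ℂ)) = (-(l:ℂ)) * ((-a + r) / l + s) := by
    intro r _ s _
    push_cast
    field_simp
    ring
  rw [prod_congr rfl (fun r hr => prod_congr rfl (fun s hs => h r hr s hs))]
  rw [prod_congr rfl (fun r _ => Finset.prod_mul_distrib)]
  rw [Finset.prod_mul_distrib]
  simp only [prod_const, card_range]
  rw [← pow_mul, neg_pow, mul_assoc, Nat.mul_comm j l, mul_assoc]

lemma cc_eq (d : ℕ) (α : ℕ → ℂ) (ρ : ℂ) (z : ℂ) :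
    cc d α ρ z = ρ * ∏ k ∈ range (d + 1), (z + (if k < d then α k else 0)) := by
  have h : ∏ k ∈ range (d + 1), (z + (if k < d then α k else 0))
      = (∏ k ∈ range d, (z + α k)) * z := by
    rw [prod_range_succ, if_neg (lt_irrefl d)]
    congr 1
    · exact prod_congr rfl (fun k hk => by rw [if_pos (mem_range.mp hk)])
    · ring
  rw [cc, h]
  ring

lemma coeffId (d : ℕ) (α : ℕ → ℂ) (ρ : ℂ) (l : ℕ) (hl : 1 ≤ l) (n j : ℕ) :
    ∏ i ∈ range (l * j), cc d α ρ ((n : ℂ) - i)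
      = (-1 : ℂ) ^ (l * j * (d + 1)) * ((l : ℂ) ^ (d + 1) * ρ) ^ (l * j)
        * ∏ k ∈ range (d + 1), ∏ r ∈ range l,
            poch ((-(n : ℂ) - (if k < d then α k else 0) + r) / l) j := by
  have hl0 : (l : ℂ) ≠ 0 := by
    exact_mod_cast Nat.cast_ne_zero.mpr (by omega)
  calc ∏ i ∈ range (l * j), cc d α ρ ((n : ℂ) - i)
      = ∏ i ∈ range (l * j), (ρ * ∏ k ∈ range (d + 1),
          (((n : ℂ) + (if k < d then α k else 0)) - i)) := by
        apply prod_congr rfl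
        intro i _
        rw [cc_eq]
        congr 1
        exact prod_congr rfl (fun k _ => by ring)
    _ = ρ ^ (l * j) * ∏ k ∈ range (d + 1), ∏ i ∈ range (l * j),
          (((n : ℂ) + (if k < d then α k else 0)) - i) := by
        rw [Finset.prod_mul_distrib, prod_const, card_range, Finset.prod_comm]
    _ = ρ ^ (l * j) * ∏ k ∈ range (d + 1),
          ((-1 : ℂ) ^ (l * j) * (l : ℂ) ^ (l * j)
            * ∏ r ∈ range l, poch ((-(n : ℂ) - (if k < d then α k else 0) + r) / l) j) := by
        congr 1
        apply prod_congr rfl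
        intro k _
        rw [perk _ _ _ hl0]
        congr 1
        apply prod_congr rfl
        intro r _
        rw [poch]
        apply prod_congr rfl
        intro s _
        ring_nf
    _ = _ := by
        rw [Finset.prod_mul_distrib, prod_const, card_range, mul_pow, ← pow_mul, ← pow_mul,
          mul_pow, ← pow_mul, Nat.mul_comm (d+1) (l*j)]
        ring

end Aux

/-- Hypergeometric representation for `q(G) = G^l`, discrete case, with `α_{d+1} = 0`
and `η = l^{d+1}ρ`. -/
theorem stmt16 (d : ℕ) (α : ℕ → ℂ) (ρ : ℂ) (hρ : ρ ≠ 0) (l : ℕ) (hl : 1 ≤ l) (n : ℕ) :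
    let G := Gdis d α ρ
    let η : ℂ := (l : ℂ) ^ (d + 1) * ρ
    let A : ℕ → ℂ := fun k => if k < d then α k else 0
    (∑ j ∈ Finset.range (n + 1),
        ((j.factorial : ℂ))⁻¹ • ((G ^ l) ^ j) (ffact n))
      = ∑ j ∈ Finset.range (n / l + 1),
          (((-1 : ℂ) ^ (l * j * (d + 1)) * η ^ (l * j)
              * ∏ k ∈ Finset.range (d + 1), ∏ r ∈ Finset.range l,
                  poch ((-(n : ℂ) - A k + r) / (l : ℂ)) j) / (j.factorial : ℂ))
            • ffact (n - l * j) := by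
  intro G η A
  have key : ∀ j : ℕ, ((G ^ l) ^ j) (ffact n)
      = (∏ i ∈ Finset.range (l * j), cc d α ρ ((n : ℂ) - i)) • ffact (n - l * j) := by
    intro j
    show ((Gdis d α ρ ^ l) ^ j) (ffact n) = _
    rw [← pow_mul]
    exact Gpow_ffact d α ρ (l * j) n
  have hsub : Finset.range (n / l + 1) ⊆ Finset.range (n + 1) := by
    apply Finset.range_subset_range.mpr
    have := Nat.div_le_self n l
    omega
  rw [← Finset.sum_subset hsub]
  · apply Finset.sum_congr rfl
    intro j hj
    rw [key, smul_smul]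
    show _ = (((-1 : ℂ) ^ (l * j * (d + 1)) * ((l : ℂ) ^ (d + 1) * ρ) ^ (l * j)
              * ∏ k ∈ Finset.range (d + 1), ∏ r ∈ Finset.range l,
                  poch ((-(n : ℂ) - (if k < d then α k else 0) + r) / (l : ℂ)) j)
          / (j.factorial : ℂ)) • ffact (n - l * j)
    congr 1
    rw [coeffId d α ρ l hl n j]
    ring
  · intro j hj hj'
    have hlt : n < l * j := by
      simp only [Finset.mem_range, not_lt] at hj hj'
      have hl0 : 0 < l := hl
      have h1 : n / l < j := by omega
      have h2 : n < j * l := (Nat.div_lt_iff_lt_mul hl0).mp h1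
      calc n < j * l := h2
        _ = l * j := Nat.mul_comm j l
    rw [key]
    have hz : (∏ i ∈ Finset.range (l * j), cc d α ρ ((n : ℂ) - i)) = 0 := by
      apply Finset.prod_eq_zero (Finset.mem_range.mpr hlt)
      simp [cc]
    rw [hz]
    simp
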